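/- Let A be an n×n row-stochastic matrix with all entries at least α > 0. Then the powers A^k converge entrywise as k → ∞, and the limit is a row-stochastic matrix of rank 1; moreover ‖A^k‖ ≤ (1 − nα)^k where ‖·‖ is the seminorm measuring sup-norm distance of the image to the all-ones line. -/
import Mathlib


open Matrix Filter

/-- Row-stochastic matrix: nonnegative entries and row sums equal to 1. -/
def Stochastic {n : ℕ} (A : Matrix (Fin n) (Fin n) ℝ) : Prop :=
  (∀ i j, 0 ≤ A i j) ∧ ∀ i, ∑ j, A i j = 1

/-- There is a walk of length `k` from `i` to `j` in the digraph with edge relation `E`. -/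
def HasWalk {n : ℕ} (E : Fin n → Fin n → Prop) (i j : Fin n) (k : ℕ) : Prop :=
  ∃ f : ℕ → Fin n, f 0 = i ∧ f k = j ∧ ∀ m < k, E (f m) (f (m + 1))

/-- The gcd of the lengths of closed walks at `i` (which all stay inside the strongly
connected component of `i`) is 1.  Equivalently, the component of `i` is aperiodic. -/
def AperiodicAt {n : ℕ} (E : Fin n → Fin n → Prop) (i : Fin n) : Prop :=
  ∀ d : ℕ, (∀ k, 0 < k → HasWalk E i i k → d ∣ k) → d = 1

/-- `backProd A l m = A (l+m) ⬝ A (l+m-1) ⬝ ⋯ ⬝ A (l+1)`, so that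
`backProd A l (k-l)` is the partial product `P(k,l)` and `backProd A 0 k = P(k)`. -/
def backProd {n : ℕ} (A : ℕ → Matrix (Fin n) (Fin n) ℝ) (l : ℕ) : ℕ → Matrix (Fin n) (Fin n) ℝ
  | 0 => 1
  | m + 1 => A (l + m + 1) * backProd A l m

/-- Vector seminorm: sup-norm distance to the line spanned by the all-ones vector. -/
noncomputable def sn {n : ℕ} (x : Fin n → ℝ) : ℝ :=
  ⨅ c : ℝ, ‖x - Function.const (Fin n) c‖

/-- Induced matrix seminorm `‖A‖ = sup { ‖Ax‖/‖x‖ : ‖x‖ ≠ 0 }`. -/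
noncomputable def msn {n : ℕ} (A : Matrix (Fin n) (Fin n) ℝ) : ℝ :=
  sSup {r : ℝ | ∃ x : Fin n → ℝ, sn x ≠ 0 ∧ r = sn (A.mulVec x) / sn x}

/-- `mu P j` = minimum of the positive entries of column `j` of `P`. -/
noncomputable def mu {n : ℕ} (P : Matrix (Fin n) (Fin n) ℝ) (j : Fin n) : ℝ :=
  sInf {v : ℝ | ∃ i, 0 < P i j ∧ P i j = v}

/-- Completely reducible: whenever `A i j > 0` there is a directed walk from `j`
back to `i` in `G(A)`; i.e. no edges between distinct strongly connected components. -/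
def CompRed {n : ℕ} (A : Matrix (Fin n) (Fin n) ℝ) : Prop :=
  ∀ i j, 0 < A i j → ∃ k, HasWalk (fun a b => 0 < A a b) j i k

section aux
variable {n : ℕ}

lemma sn_nonneg (x : Fin n → ℝ) : 0 ≤ sn x :=
  Real.iInf_nonneg fun _ => norm_nonneg _

lemma sn_le_half_osc (hn : 0 < n) (x : Fin n → ℝ) (m M : ℝ)
    (hm : ∀ i, m ≤ x i) (hM : ∀ i, x i ≤ M) : sn x ≤ (M - m) / 2 := by
  have hMm : 0 ≤ M - m := by have h1 := hm ⟨0, hn⟩; have h2 := hM ⟨0, hn⟩; linarith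
  have hb : BddBelow (Set.range fun c : ℝ => ‖x - Function.const (Fin n) c‖) :=
    ⟨0, by rintro r ⟨c, rfl⟩; exact norm_nonneg _⟩
  refine ciInf_le_of_le hb ((M + m) / 2) ?_
  rw [pi_norm_le_iff_of_nonneg (by linarith)]
  intro i
  have h1 := hm i; have h2 := hM i
  simp only [Pi.sub_apply, Function.const_apply, Real.norm_eq_abs]
  rw [abs_le]; constructor <;> linarith

lemma osc_le_two_sn (x : Fin n → ℝ) (i i' : Fin n) : x i - x i' ≤ 2 * sn x := by
  have h : (x i - x i') / 2 ≤ sn x := by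
    refine le_ciInf fun c => ?_
    have h1 := norm_le_pi_norm (x - Function.const (Fin n) c) i
    have h2 := norm_le_pi_norm (x - Function.const (Fin n) c) i'
    simp only [Pi.sub_apply, Function.const_apply, Real.norm_eq_abs] at h1 h2
    have h3 : x i - c ≤ |x i - c| := le_abs_self _
    have h4 : -(x i' - c) ≤ |x i' - c| := neg_le_abs _
    linarith
  linarith

lemma stoch_mul {A B : Matrix (Fin n) (Fin n) ℝ} (hA : Stochastic A) (hB : Stochastic B) :
    Stochastic (A * B) := by
  constructor
  · intro i j
    rw [Matrix.mul_apply]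
    exact Finset.sum_nonneg fun l _ => mul_nonneg (hA.1 i l) (hB.1 l j)
  · intro i
    simp only [Matrix.mul_apply]
    rw [Finset.sum_comm]
    have : ∀ l ∈ Finset.univ, ∑ j, A i l * B l j = A i l := by
      intro l _
      rw [← Finset.mul_sum, hB.2 l, mul_one]
    rw [Finset.sum_congr rfl this]
    exact hA.2 i

lemma stoch_pow {A : Matrix (Fin n) (Fin n) ℝ} (hA : Stochastic A) (k : ℕ) :
    Stochastic (A ^ k) := by
  induction k with
  | zero =>
    constructor
    · intro i j; simp [Matrix.one_apply]; split <;> norm_num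
    · intro i; simp [Matrix.one_apply]
  | succ k ih =>
    rw [pow_succ]
    exact stoch_mul ih hA

lemma key_contr (hn : 0 < n) {A : Matrix (Fin n) (Fin n) ℝ} {α : ℝ}
    (hA : Stochastic A) (hent : ∀ i j, α ≤ A i j) (x : Fin n → ℝ) (m M : ℝ)
    (hm : ∀ j, m ≤ x j) (hM : ∀ j, x j ≤ M) (i i' : Fin n) :
    A.mulVec x i - A.mulVec x i' ≤ (1 - n * α) * (M - m) := by
  have hMm : 0 ≤ M - m := by have h1 := hm ⟨0, hn⟩; have h2 := hM ⟨0, hn⟩; linarith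
  have h1 : A.mulVec x i - A.mulVec x i' = ∑ j, (A i j - A i' j) * (x j - m) := by
    have e : ∀ j ∈ Finset.univ, (A i j - A i' j) * (x j - m)
        = (A i j * x j - A i' j * x j) - (A i j * m - A i' j * m) := fun j _ => by ring
    rw [Finset.sum_congr rfl e, Finset.sum_sub_distrib, Finset.sum_sub_distrib,
      Finset.sum_sub_distrib, ← Finset.sum_mul, ← Finset.sum_mul, hA.2 i, hA.2 i']
    simp [Matrix.mulVec, dotProduct]
  have h2 : ∀ j ∈ Finset.univ, (A i j - A i' j) * (x j - m)
      ≤ (max (A i j) (A i' j) - A i' j) * (M - m) := by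
    intro j _
    have hmj := hm j; have hMj := hM j
    rcases le_total (A i j) (A i' j) with h | h
    · rw [max_eq_right h]
      have : (A i j - A i' j) * (x j - m) ≤ 0 := mul_nonpos_of_nonpos_of_nonneg (by linarith) (by linarith)
      simpa using this
    · rw [max_eq_left h]
      exact mul_le_mul (le_refl _) (by linarith) (by linarith) (by linarith)
  have h3 : ∑ j, (max (A i j) (A i' j) - A i' j) = 1 - ∑ j, min (A i j) (A i' j) := by
    have e : ∀ j ∈ Finset.univ, max (A i j) (A i' j) - A i' j
        = A i j - min (A i j) (A i' j) := by
      intro j _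
      rcases le_total (A i j) (A i' j) with h | h
      · rw [max_eq_right h, min_eq_left h]; ring
      · rw [max_eq_left h, min_eq_right h]
    rw [Finset.sum_congr rfl e, Finset.sum_sub_distrib, hA.2 i]
  have h4 : (n : ℝ) * α ≤ ∑ j, min (A i j) (A i' j) := by
    have := Finset.card_nsmul_le_sum Finset.univ (fun j => min (A i j) (A i' j)) α
      (fun j _ => le_min (hent i j) (hent i' j))
    simpa [nsmul_eq_mul] using this
  calc A.mulVec x i - A.mulVec x i' = ∑ j, (A i j - A i' j) * (x j - m) := h1
    _ ≤ ∑ j, (max (A i j) (A i' j) - A i' j) * (M - m) := Finset.sum_le_sum h2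
    _ = (1 - ∑ j, min (A i j) (A i' j)) * (M - m) := by rw [← Finset.sum_mul, h3]
    _ ≤ (1 - n * α) * (M - m) := mul_le_mul_of_nonneg_right (by linarith) hMm

lemma sn_contr (hn : 0 < n) {A : Matrix (Fin n) (Fin n) ℝ} {α : ℝ}
    (hA : Stochastic A) (hent : ∀ i j, α ≤ A i j) (hna : (n : ℝ) * α ≤ 1) (x : Fin n → ℝ) :
    sn (A.mulVec x) ≤ (1 - n * α) * sn x := by
  have hne : Nonempty (Fin n) := ⟨⟨0, hn⟩⟩
  obtain ⟨iM, hiM⟩ := Finite.exists_max x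
  obtain ⟨im, him⟩ := Finite.exists_min x
  obtain ⟨jM, hjM⟩ := Finite.exists_max (A.mulVec x)
  obtain ⟨jm, hjm⟩ := Finite.exists_min (A.mulVec x)
  have h1 : sn (A.mulVec x) ≤ (A.mulVec x jM - A.mulVec x jm) / 2 :=
    sn_le_half_osc hn _ _ _ hjm hjM
  have h2 : A.mulVec x jM - A.mulVec x jm ≤ (1 - n * α) * (x iM - x im) :=
    key_contr hn hA hent x _ _ him hiM jM jm
  have h3 : x iM - x im ≤ 2 * sn x := osc_le_two_sn x iM im
  have h4 : (1 - (n:ℝ) * α) * (x iM - x im) ≤ (1 - n * α) * (2 * sn x) :=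
    mul_le_mul_of_nonneg_left h3 (by linarith)
  linarith

end aux

theorem stmt18 {n : ℕ} (A : Matrix (Fin n) (Fin n) ℝ) (α : ℝ) (hα : 0 < α)
    (hA : Stochastic A) (hent : ∀ i j, α ≤ A i j) :
    (∃ L : Matrix (Fin n) (Fin n) ℝ, Stochastic L ∧ (∀ i i' j, L i j = L i' j) ∧
      ∀ i j, Tendsto (fun k => (A ^ k) i j) atTop (nhds (L i j))) ∧
    ∀ k : ℕ, msn (A ^ k) ≤ (1 - n * α) ^ k := by
  rcases Nat.eq_zero_or_pos n with hn | hn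
  · subst hn
    constructor
    · exact ⟨1, ⟨fun i => i.elim0, fun i => i.elim0⟩, fun i => i.elim0, fun i => i.elim0⟩
    · intro k
      apply Real.sSup_le
      · rintro ρ ⟨x, hx, rfl⟩
        exfalso
        apply hx
        have hx0 : ∀ y : Fin 0 → ℝ, y = 0 := fun y => funext fun i => i.elim0
        simp only [sn]
        have : ∀ c : ℝ, ‖x - Function.const (Fin 0) c‖ = 0 := by
          intro c; rw [hx0 (x - Function.const (Fin 0) c), norm_zero]
        simp [this]
      · norm_num
  have hne : Nonempty (Fin n) := ⟨⟨0, hn⟩⟩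
  have hna1 : (n : ℝ) * α ≤ 1 := by
    have h1 := hA.2 ⟨0, hn⟩
    have h2 := Finset.card_nsmul_le_sum Finset.univ (fun j => A ⟨0, hn⟩ j) α
      (fun j _ => hent _ j)
    simp only [nsmul_eq_mul, Finset.card_univ, Fintype.card_fin] at h2
    rw [h1] at h2
    exact h2
  have hna0 : (0 : ℝ) < n * α := by
    have : (0 : ℝ) < n := Nat.cast_pos.mpr hn
    positivity
  have hr0 : (0 : ℝ) ≤ 1 - n * α := by linarith
  have hr1 : (1 : ℝ) - n * α < 1 := by linarith
  have hrt : Tendsto (fun k : ℕ => (1 - (n : ℝ) * α) ^ k) atTop (nhds 0) :=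
    tendsto_pow_atTop_nhds_zero_of_lt_one hr0 hr1
  have snpow : ∀ (k : ℕ) (x : Fin n → ℝ),
      sn ((A ^ k).mulVec x) ≤ (1 - n * α) ^ k * sn x := by
    intro k
    induction k with
    | zero => intro x; simp [Matrix.one_mulVec]
    | succ k ih =>
      intro x
      rw [pow_succ']
      rw [← Matrix.mulVec_mulVec]
      calc sn (A.mulVec ((A ^ k).mulVec x)) ≤ (1 - n * α) * sn ((A ^ k).mulVec x) :=
            sn_contr hn hA hent hna1 _
        _ ≤ (1 - n * α) * ((1 - n * α) ^ k * sn x) :=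
            mul_le_mul_of_nonneg_left (ih x) hr0
        _ = (1 - n * α) ^ (k + 1) * sn x := by ring
  -- column oscillation bound
  have hosc : ∀ (j : Fin n) (k : ℕ) (i i' : Fin n),
      (A ^ k) i j - (A ^ k) i' j ≤ (1 - n * α) ^ k := by
    intro j k i i'
    have hcol : ∀ i : Fin n, (A ^ k).mulVec (Pi.single j 1) i = (A ^ k) i j := by
      intro i
      simp [Matrix.mulVec, dotProduct, Pi.single_apply, mul_ite]
    have h1 : (A ^ k) i j - (A ^ k) i' j ≤ 2 * sn ((A ^ k).mulVec (Pi.single j 1)) := by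
      rw [← hcol i, ← hcol i']
      exact osc_le_two_sn _ i i'
    have h2 := snpow k (Pi.single j 1)
    have h3 : sn (Pi.single j (1 : ℝ)) ≤ (1 - 0) / 2 := by
      apply sn_le_half_osc hn _ 0 1
      · intro i; simp [Pi.single_apply]; split <;> norm_num
      · intro i; simp [Pi.single_apply]; split <;> norm_num
    have h4 : (0 : ℝ) ≤ (1 - (n : ℝ) * α) ^ k := pow_nonneg hr0 k
    nlinarith [sn_nonneg ((A ^ k).mulVec (Pi.single j 1))]
  -- entries of later powers stay within column bounds of earlier powers
  have hbound : ∀ (j : Fin n) (N : ℕ), ∃ lm lM : Fin n,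
      ∀ k, N ≤ k → ∀ i, (A ^ N) lm j ≤ (A ^ k) i j ∧ (A ^ k) i j ≤ (A ^ N) lM j := by
    intro j N
    obtain ⟨lm, hlm⟩ := Finite.exists_min (fun l => (A ^ N) l j)
    obtain ⟨lM, hlM⟩ := Finite.exists_max (fun l => (A ^ N) l j)
    refine ⟨lm, lM, ?_⟩
    intro k hNk i
    obtain ⟨p, rfl⟩ := Nat.exists_eq_add_of_le hNk
    rw [add_comm, pow_add]
    have hp := stoch_pow hA p
    rw [Matrix.mul_apply]
    constructor
    · calc (A ^ N) lm j = (∑ l, (A ^ p) i l) * (A ^ N) lm j := by rw [hp.2 i, one_mul]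
        _ = ∑ l, (A ^ p) i l * (A ^ N) lm j := by rw [Finset.sum_mul]
        _ ≤ ∑ l, (A ^ p) i l * (A ^ N) l j :=
            Finset.sum_le_sum fun l _ => mul_le_mul_of_nonneg_left (hlm l) (hp.1 i l)
    · calc ∑ l, (A ^ p) i l * (A ^ N) l j ≤ ∑ l, (A ^ p) i l * (A ^ N) lM j :=
            Finset.sum_le_sum fun l _ => mul_le_mul_of_nonneg_left (hlM l) (hp.1 i l)
        _ = (∑ l, (A ^ p) i l) * (A ^ N) lM j := by rw [Finset.sum_mul]
        _ = (A ^ N) lM j := by rw [hp.2 i, one_mul]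
  have hconv : ∀ i j, ∃ l : ℝ, Tendsto (fun k => (A ^ k) i j) atTop (nhds l) := by
    intro i j
    apply cauchySeq_tendsto_of_complete
    apply cauchySeq_of_le_tendsto_0 (fun N => (1 - (n : ℝ) * α) ^ N) _ hrt
    intro k m N hNk hNm
    obtain ⟨lm, lM, hb⟩ := hbound j N
    have h1 := hb k hNk i
    have h2 := hb m hNm i
    have h3 := hosc j N lM lm
    rw [Real.dist_eq, abs_le]
    constructor <;> linarith [h1.1, h1.2, h2.1, h2.2]
  choose L hL using hconv
  have hrow : ∀ i i' j, L i j = L i' j := by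
    intro i i' j
    have hdiff : Tendsto (fun k => (A ^ k) i j - (A ^ k) i' j) atTop
        (nhds (L i j - L i' j)) := (hL i j).sub (hL i' j)
    have h0 : Tendsto (fun k => (A ^ k) i j - (A ^ k) i' j) atTop (nhds 0) := by
      apply squeeze_zero_norm _ hrt
      intro k
      rw [Real.norm_eq_abs, abs_le]
      exact ⟨by linarith [hosc j k i' i], hosc j k i i'⟩
    have := tendsto_nhds_unique hdiff h0
    linarith
  refine ⟨⟨L, ⟨?_, ?_⟩, hrow, hL⟩, ?_⟩
  · intro i j
    exact ge_of_tendsto' (hL i j) fun k => (stoch_pow hA k).1 i j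
  · intro i
    have h1 : Tendsto (fun k => ∑ j, (A ^ k) i j) atTop (nhds (∑ j, L i j)) :=
      tendsto_finset_sum _ fun j _ => hL i j
    have h2 : (fun k => ∑ j, (A ^ k) i j) = fun _ => (1 : ℝ) :=
      funext fun k => (stoch_pow hA k).2 i
    rw [h2] at h1
    exact tendsto_nhds_unique h1 tendsto_const_nhds
  · intro k
    apply Real.sSup_le _ (pow_nonneg hr0 k)
    rintro ρ ⟨x, hx, rfl⟩
    have hsx : 0 < sn x := lt_of_le_of_ne (sn_nonneg x) (Ne.symm hx)
    rw [div_le_iff₀ hsx]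
    exact snpow k x
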